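/- Let U ⊆ ℝⁿ be open with a smooth Riemannian metric g (inverse entries g^{ij}), λ ∈ ℝ, and a flat Higgs field θ_1,…,θ_n : U → M_r(ℂ) (∂_iθ_j = ∂_jθ_i, θ_iθ_j = θ_jθ_i). Suppose H, K : U → {positive definite Hermitian r×r complex matrices} are smooth and both satisfy the affine Hermitian–Einstein equation in local affine coordinates: Σ_{i,j} g^{ij}(∂_i∂_jH − ∂_jH·H⁻¹·∂_iH − 4(Hθ_iH⁻¹θ_j^†H − θ_j^†Hθ_i)) + 4λH = 0, and the same equation with K in place of H. Then σ(H,K) := tr(H⁻¹K) + tr(K⁻¹H) − 2r is subharmonic with respect to the affine Laplace operator: Σ_{i,j} g^{ij} ∂_i∂_j σ(H,K) ≥ 0 on U. (Proposition 3.4 in local affine coordinates.) -/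

import Mathlib

open Matrix
open scoped ComplexOrder

attribute [local instance] Matrix.normedAddCommGroup Matrix.normedSpace

/-- Partial derivative in the `i`-th coordinate direction of a function on `ℝⁿ`. -/
noncomputable def pd {n : ℕ} {E : Type} [NormedAddCommGroup E] [NormedSpace ℝ E]
    (i : Fin n) (f : (Fin n → ℝ) → E) (x : Fin n → ℝ) : E :=
  fderiv ℝ f x (Pi.single i 1)


section calculus
variable {n : ℕ} {E F G W : Type} [NormedAddCommGroup E] [NormedSpace ℝ E]
  [NormedAddCommGroup F] [NormedSpace ℝ F] [NormedAddCommGroup G] [NormedSpace ℝ G]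
  [NormedAddCommGroup W] [NormedSpace ℝ W]
variable {x : Fin n → ℝ} {i : Fin n}

lemma pd_congr {f g : (Fin n → ℝ) → E} (h : f =ᶠ[nhds x] g) : pd i f x = pd i g x := by
  unfold pd; rw [Filter.EventuallyEq.fderiv_eq h]

lemma pd_const (c : E) : pd i (fun _ => c) x = 0 := by simp [pd]

lemma pd_add {f g : (Fin n → ℝ) → E} (hf : DifferentiableAt ℝ f x) (hg : DifferentiableAt ℝ g x) :
    pd i (fun z => f z + g z) x = pd i f x + pd i g x := by
  simp [pd, fderiv_fun_add hf hg]

lemma pd_neg {f : (Fin n → ℝ) → E} : pd i (fun z => -f z) x = -pd i f x := by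
  simp [pd, fderiv_neg]

lemma pd_sub_const {f : (Fin n → ℝ) → E} (c : E) :
    pd i (fun z => f z - c) x = pd i f x := by simp [pd, fderiv_sub_const]

lemma pd_clm (L : F →L[ℝ] G) {f : (Fin n → ℝ) → F} (hf : DifferentiableAt ℝ f x) :
    pd i (fun z => L (f z)) x = L (pd i f x) := by
  have h : HasFDerivAt (fun z => L (f z)) (L.comp (fderiv ℝ f x)) x :=
    L.hasFDerivAt.comp x hf.hasFDerivAt
  simp [pd, h.fderiv]

lemma pd_bilin (B : F →L[ℝ] G →L[ℝ] W) {f : (Fin n → ℝ) → F} {g : (Fin n → ℝ) → G}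
    (hf : DifferentiableAt ℝ f x) (hg : DifferentiableAt ℝ g x) :
    pd i (fun z => B (f z) (g z)) x = B (pd i f x) (g x) + B (f x) (pd i g x) := by
  have h := B.hasFDerivAt_of_bilinear hf.hasFDerivAt hg.hasFDerivAt
  simp [pd, h.fderiv, ContinuousLinearMap.precompR, ContinuousLinearMap.precompL]
  abel

lemma diff_bilin (B : F →L[ℝ] G →L[ℝ] W) {f : (Fin n → ℝ) → F} {g : (Fin n → ℝ) → G}
    (hf : DifferentiableAt ℝ f x) (hg : DifferentiableAt ℝ g x) :
    DifferentiableAt ℝ (fun z => B (f z) (g z)) x :=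
  (B.hasFDerivAt_of_bilinear hf.hasFDerivAt hg.hasFDerivAt).differentiableAt

end calculus


section matrixcalc
variable {q r : ℕ}

noncomputable def mulL {r : ℕ} :
    Matrix (Fin r) (Fin r) ℂ →L[ℝ] Matrix (Fin r) (Fin r) ℂ →L[ℝ] Matrix (Fin r) (Fin r) ℂ :=
  LinearMap.toContinuousLinearMap
    ((LinearMap.toContinuousLinearMap :
        (Matrix (Fin r) (Fin r) ℂ →ₗ[ℝ] Matrix (Fin r) (Fin r) ℂ) ≃ₗ[ℝ] _).toLinearMap.comp
      (LinearMap.mul ℝ (Matrix (Fin r) (Fin r) ℂ)))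

@[simp] lemma mulL_apply {r : ℕ} (A B : Matrix (Fin r) (Fin r) ℂ) : mulL A B = A * B := rfl

noncomputable def traceL {r : ℕ} : Matrix (Fin r) (Fin r) ℂ →L[ℝ] ℂ :=
  LinearMap.toContinuousLinearMap ((Matrix.traceLinearMap (Fin r) ℂ ℂ).restrictScalars ℝ)

@[simp] lemma traceL_apply {r : ℕ} (A : Matrix (Fin r) (Fin r) ℂ) : traceL A = Matrix.trace A := rfl

noncomputable def ctL {r : ℕ} : Matrix (Fin r) (Fin r) ℂ →L[ℝ] Matrix (Fin r) (Fin r) ℂ :=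
  LinearMap.toContinuousLinearMap
    { toFun := fun A => Aᴴ
      map_add' := fun A B => by ext a b; simp
      map_smul' := fun c A => by
        ext a b
        simp [Matrix.conjTranspose_apply, Complex.ext_iff] }

@[simp] lemma ctL_apply {r : ℕ} (A : Matrix (Fin r) (Fin r) ℂ) : ctL A = Aᴴ := rfl

variable {x : Fin q → ℝ} {i : Fin q} {f g : (Fin q → ℝ) → Matrix (Fin r) (Fin r) ℂ}

lemma pd_mul (hf : DifferentiableAt ℝ f x) (hg : DifferentiableAt ℝ g x) :
    pd i (fun z => f z * g z) x = pd i f x * g x + f x * pd i g x := by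
  have h := pd_bilin (x := x) (i := i) mulL hf hg
  exact h

lemma diff_mul (hf : DifferentiableAt ℝ f x) (hg : DifferentiableAt ℝ g x) :
    DifferentiableAt ℝ (fun z => f z * g z) x := by
  have h := diff_bilin (x := x) mulL hf hg
  exact h

lemma pd_trace (hf : DifferentiableAt ℝ f x) :
    pd i (fun z => Matrix.trace (f z)) x = Matrix.trace (pd i f x) := by
  have h := pd_clm (x := x) (i := i) traceL hf
  exact h

lemma diff_trace (hf : DifferentiableAt ℝ f x) :
    DifferentiableAt ℝ (fun z => Matrix.trace (f z)) x := by
  have h := ((traceL (r := r)).differentiableAt).comp x hf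
  simpa [Function.comp_def] using h

lemma pd_ct (hf : DifferentiableAt ℝ f x) :
    pd i (fun z => (f z)ᴴ) x = (pd i f x)ᴴ := by
  have h := pd_clm (x := x) (i := i) ctL hf
  exact h

lemma pd_re {h : (Fin q → ℝ) → ℂ} (hf : DifferentiableAt ℝ h x) :
    pd i (fun z => (h z).re) x = (pd i h x).re := by
  have h2 := pd_clm (x := x) (i := i) Complex.reCLM hf
  simpa using h2

lemma diff_entry (hf : DifferentiableAt ℝ f x) (a b : Fin r) :
    DifferentiableAt ℝ (fun z => f z a b) x := by
  have h1 := (differentiableAt_pi.mp hf) a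
  exact (differentiableAt_pi.mp h1) b

lemma diff_matrix (h : ∀ a b, DifferentiableAt ℝ (fun z => f z a b) x) :
    DifferentiableAt ℝ f x := by
  refine differentiableAt_pi.mpr ?_
  intro a
  refine differentiableAt_pi.mpr ?_
  exact h a

lemma diff_fprod {ι : Type*} (s : Finset ι) (F : ι → (Fin q → ℝ) → ℂ)
    (h : ∀ a, DifferentiableAt ℝ (F a) x) :
    DifferentiableAt ℝ (fun z => ∏ a ∈ s, F a z) x := by
  classical
  induction s using Finset.induction_on with
  | empty => simpa using differentiableAt_const (1 : ℂ)
  | insert _ _ hni ih =>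
      simp only [Finset.prod_insert hni]
      exact (h _).mul ih

lemma diff_det (hf : DifferentiableAt ℝ f x) :
    DifferentiableAt ℝ (fun z => (f z).det) x := by
  have h : (fun z => (f z).det)
      = fun z => ∑ σ : Equiv.Perm (Fin r), ((Equiv.Perm.sign σ : ℤ) : ℂ) * ∏ a, f z (σ a) a := by
    funext z
    rw [Matrix.det_apply]
    refine Finset.sum_congr rfl fun σ _ => ?_
    simp [Units.smul_def, zsmul_eq_mul]
  rw [h]
  refine DifferentiableAt.fun_sum fun σ _ => ?_
  exact (differentiableAt_const _).mul
    (diff_fprod _ _ fun a => diff_entry hf (σ a) a)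

lemma diff_adjugate (hf : DifferentiableAt ℝ f x) :
    DifferentiableAt ℝ (fun z => (f z).adjugate) x := by
  refine diff_matrix fun a b => ?_
  have h : (fun z => (f z).adjugate a b)
      = fun z => ((f z).updateRow b (Pi.single a 1)).det := by
    funext z; rw [Matrix.adjugate_apply]
  rw [h]
  refine diff_det (diff_matrix fun a' b' => ?_)
  rcases eq_or_ne a' b with h' | h'
  · subst h'; simp [Matrix.updateRow_apply]
  · simpa [Matrix.updateRow_apply, h'] using diff_entry hf a' b'

lemma diff_inv (hf : DifferentiableAt ℝ f x) (hdet : IsUnit (f x).det) :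
    DifferentiableAt ℝ (fun z => (f z)⁻¹) x := by
  have h : (fun z => (f z)⁻¹) = fun z => ((f z).det)⁻¹ • (f z).adjugate := by
    funext z; rw [Matrix.inv_def, Ring.inverse_eq_inv]
  rw [h]
  have hdet' : (f x).det ≠ 0 := by
    simpa [isUnit_iff_ne_zero] using hdet
  have h1 : DifferentiableAt ℝ (fun z => ((f z).det)⁻¹) x := by
    have hinv : DifferentiableAt ℝ (fun w : ℂ => w⁻¹) ((f x).det) :=
      differentiableAt_inv (𝕜 := ℝ) hdet'
    have := hinv.comp x (diff_det hf)
    simpa [Function.comp_def] using this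
  exact DifferentiableAt.smul (𝕜' := ℂ) h1 (diff_adjugate hf)

lemma pd_inv {U : Set (Fin q → ℝ)} (hU : IsOpen U) (hx : x ∈ U)
    (hf : DifferentiableAt ℝ f x) (hinv : ∀ y ∈ U, IsUnit (f y).det) :
    pd i (fun z => (f z)⁻¹) x = -((f x)⁻¹ * pd i f x * (f x)⁻¹) := by
  have hdi := diff_inv hf (hinv x hx)
  have h1 : (fun z => (f z)⁻¹ * f z) =ᶠ[nhds x]
      (fun _ => (1 : Matrix (Fin r) (Fin r) ℂ)) :=
    Filter.eventuallyEq_of_mem (hU.mem_nhds hx)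
      (fun y hy => Matrix.nonsing_inv_mul _ (hinv y hy))
  have h2 : pd i (fun z => (f z)⁻¹ * f z) x = 0 := by
    rw [pd_congr h1, pd_const]
  rw [pd_mul hdi hf] at h2
  have h3 := congrArg (fun Z => Z * (f x)⁻¹) h2
  simp only [Matrix.add_mul, Matrix.zero_mul, Matrix.mul_assoc] at h3
  rw [Matrix.mul_nonsing_inv _ (hinv x hx)] at h3
  simp only [Matrix.mul_one] at h3
  have h4 := add_eq_zero_iff_eq_neg.mp h3
  rw [h4]
  simp [Matrix.mul_assoc]

lemma diff_pd {U : Set (Fin q → ℝ)} (hU : IsOpen U) (hx : x ∈ U)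
    (hf : ContDiffOn ℝ (⊤ : ℕ∞) f U) (j : Fin q) :
    DifferentiableAt ℝ (fun y => pd j f y) x := by
  exact (((hf.contDiffAt (hU.mem_nhds hx)).fderiv_right (m := 1) (WithTop.coe_le_coe.mpr (le_top : ((1 + 1 : ℕ) : ℕ∞) ≤ ⊤))).differentiableAt
    one_ne_zero).clm_apply (differentiableAt_const _)

lemma diff_of_contDiffOn {U : Set (Fin q → ℝ)} (hU : IsOpen U) (hx : x ∈ U)
    (hf : ContDiffOn ℝ (⊤ : ℕ∞) f U) : DifferentiableAt ℝ f x :=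
  (hf.differentiableOn (by simp)).differentiableAt (hU.mem_nhds hx)

end matrixcalc


section positivity
variable {n r : ℕ}

lemma quad_nonneg (G : Matrix (Fin n) (Fin n) ℝ) (hG : G.PosSemidef) (v : Fin n → ℂ) :
    0 ≤ (∑ i, ∑ j, ((G i j : ℝ) : ℂ) * ((starRingEnd ℂ) (v i) * v j)).re := by
  have h1 : ∀ u : Fin n → ℝ, 0 ≤ ∑ i, ∑ j, G i j * (u i * u j) := by
    intro u
    have h := hG.dotProduct_mulVec_nonneg u
    simp only [dotProduct, Matrix.mulVec, Pi.star_apply, star_trivial,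
      Finset.mul_sum] at h
    calc (0:ℝ) ≤ ∑ i, ∑ j, u i * (G i j * u j) := h
      _ = ∑ i, ∑ j, G i j * (u i * u j) := by
          refine Finset.sum_congr rfl fun i _ => Finset.sum_congr rfl fun j _ => by ring
  have key : ∀ i j : Fin n, (((G i j : ℝ) : ℂ) * ((starRingEnd ℂ) (v i) * v j)).re
      = G i j * ((v i).re * (v j).re) + G i j * ((v i).im * (v j).im) := by
    intro i j
    simp [Complex.mul_re, Complex.mul_im]
    ring
  rw [Complex.re_sum]
  simp only [Complex.re_sum, key, Finset.sum_add_distrib]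
  exact add_nonneg (h1 _) (h1 _)

lemma trace_mul_ct (N P : Matrix (Fin r) (Fin r) ℂ) :
    Matrix.trace (N * Pᴴ) = ∑ a, ∑ b, (starRingEnd ℂ) (P a b) * N a b := by
  simp only [Matrix.trace, Matrix.diag_apply, Matrix.mul_apply, Matrix.conjTranspose_apply]
  refine Finset.sum_congr rfl fun a _ => Finset.sum_congr rfl fun b _ => ?_
  rw [mul_comm, starRingEnd_apply]

lemma pos_trace_sum (G : Matrix (Fin n) (Fin n) ℝ) (hG : G.PosSemidef)
    {A B : Matrix (Fin r) (Fin r) ℂ} (hA : A.PosSemidef) (hB : B.PosSemidef)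
    (X : Fin n → Matrix (Fin r) (Fin r) ℂ) :
    0 ≤ (∑ i, ∑ j, ((G i j : ℝ) : ℂ) * Matrix.trace (A * (X j * (B * (X i)ᴴ)))).re := by
  obtain ⟨A2, hA2s, -, hA2⟩ := open scoped MatrixOrder in
    CFC.exists_sqrt_of_isSelfAdjoint_of_quasispectrumRestricts hA.isHermitian
      (QuasispectrumRestricts.nnreal_of_nonneg hA.nonneg)
  obtain ⟨B2, hB2s, -, hB2⟩ := open scoped MatrixOrder in
    CFC.exists_sqrt_of_isSelfAdjoint_of_quasispectrumRestricts hB.isHermitian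
      (QuasispectrumRestricts.nnreal_of_nonneg hB.nonneg)
  have hA2h : A2ᴴ = A2 := hA2s
  have hB2h : B2ᴴ = B2 := hB2s
  set N : Fin n → Matrix (Fin r) (Fin r) ℂ := fun i => A2 * X i * B2 with hN
  have step1 : ∀ i j : Fin n,
      Matrix.trace (A * (X j * (B * (X i)ᴴ))) = Matrix.trace (N j * (N i)ᴴ) := by
    intro i j
    have hct : (N i)ᴴ = B2 * (X i)ᴴ * A2 := by
      simp [hN, Matrix.conjTranspose_mul, hA2h, hB2h, Matrix.mul_assoc]
    rw [hct, ← hA2, ← hB2]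
    have e1 : A2 * A2 * (X j * (B2 * B2 * (X i)ᴴ)) = A2 * (A2 * X j * (B2 * B2 * (X i)ᴴ)) := by
      noncomm_ring
    have e2 : A2 * X j * (B2 * B2 * (X i)ᴴ) * A2 = N j * (B2 * (X i)ᴴ * A2) := by
      simp only [hN]; noncomm_ring
    rw [e1, Matrix.trace_mul_comm, e2]
  have step2 : (∑ i, ∑ j, ((G i j : ℝ) : ℂ) * Matrix.trace (A * (X j * (B * (X i)ᴴ))))
      = ∑ a, ∑ b, ∑ i, ∑ j, ((G i j : ℝ) : ℂ) *
          ((starRingEnd ℂ) (N i a b) * N j a b) := by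
    simp only [step1, trace_mul_ct, Finset.mul_sum]
    calc (∑ i, ∑ j, ∑ a, ∑ b, ((G i j : ℝ) : ℂ) * ((starRingEnd ℂ) (N i a b) * N j a b))
        = ∑ i, ∑ a, ∑ j, ∑ b, ((G i j : ℝ) : ℂ) * ((starRingEnd ℂ) (N i a b) * N j a b) :=
          Finset.sum_congr rfl (fun i _ => Finset.sum_comm)
      _ = ∑ a, ∑ i, ∑ j, ∑ b, ((G i j : ℝ) : ℂ) * ((starRingEnd ℂ) (N i a b) * N j a b) :=
          Finset.sum_comm
      _ = ∑ a, ∑ i, ∑ b, ∑ j, ((G i j : ℝ) : ℂ) * ((starRingEnd ℂ) (N i a b) * N j a b) :=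
          Finset.sum_congr rfl (fun a _ => Finset.sum_congr rfl (fun i _ => Finset.sum_comm))
      _ = ∑ a, ∑ b, ∑ i, ∑ j, ((G i j : ℝ) : ℂ) * ((starRingEnd ℂ) (N i a b) * N j a b) :=
          Finset.sum_congr rfl (fun a _ => Finset.sum_comm)
  rw [step2]
  rw [Complex.re_sum]
  refine Finset.sum_nonneg fun a _ => ?_
  rw [Complex.re_sum]
  refine Finset.sum_nonneg fun b _ => ?_
  exact quad_nonneg G hG (fun i => N i a b)
end positivity


section algebra
variable {n r : ℕ}

lemma sum_trace_collect (c : Fin n → Fin n → ℂ) (F : Fin n → Fin n → Matrix (Fin r) (Fin r) ℂ)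
    (L R : Matrix (Fin r) (Fin r) ℂ) :
    (∑ i, ∑ j, c i j * Matrix.trace (L * (F i j * R)))
      = Matrix.trace (L * ((∑ i, ∑ j, c i j • F i j) * R)) := by
  simp only [Matrix.sum_mul, Matrix.mul_sum, Matrix.trace_sum, Matrix.smul_mul, Matrix.mul_smul,
    Matrix.trace_smul, smul_eq_mul]

lemma sum_trace_collect' (c : Fin n → Fin n → ℂ) (F : Fin n → Fin n → Matrix (Fin r) (Fin r) ℂ)
    (L : Matrix (Fin r) (Fin r) ℂ) :
    (∑ i, ∑ j, c i j * Matrix.trace (L * F i j))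
      = Matrix.trace (L * (∑ i, ∑ j, c i j • F i j)) := by
  simp only [Matrix.mul_sum, Matrix.trace_sum, Matrix.mul_smul, Matrix.trace_smul, smul_eq_mul]

lemma sum_sym_eq (c L R : Fin n → Fin n → ℂ) (hc : ∀ i j, c i j = c j i)
    (h : ∀ i j, L i j + L j i = R i j + R j i) :
    (∑ i, ∑ j, c i j * L i j) = ∑ i, ∑ j, c i j * R i j := by
  have key : ∀ X : Fin n → Fin n → ℂ,
      (∑ i, ∑ j, c i j * X i j) = ∑ i, ∑ j, c i j * X j i := by
    intro X
    rw [Finset.sum_comm]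
    refine Finset.sum_congr rfl fun j _ => Finset.sum_congr rfl fun i _ => ?_
    rw [hc j i]
  have h2 : (2:ℂ) * (∑ i, ∑ j, c i j * L i j) = (2:ℂ) * (∑ i, ∑ j, c i j * R i j) := by
    calc (2:ℂ) * (∑ i, ∑ j, c i j * L i j)
        = (∑ i, ∑ j, c i j * L i j) + (∑ i, ∑ j, c i j * L j i) := by
          rw [← key L]; ring
      _ = ∑ i, ∑ j, c i j * (L i j + L j i) := by
          rw [← Finset.sum_add_distrib]
          refine Finset.sum_congr rfl fun i _ => ?_
          rw [← Finset.sum_add_distrib]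
          exact Finset.sum_congr rfl fun j _ => by ring
      _ = ∑ i, ∑ j, c i j * (R i j + R j i) := by
          refine Finset.sum_congr rfl fun i _ => Finset.sum_congr rfl fun j _ => by rw [h i j]
      _ = (∑ i, ∑ j, c i j * R i j) + (∑ i, ∑ j, c i j * R j i) := by
          rw [← Finset.sum_add_distrib]
          refine Finset.sum_congr rfl fun i _ => ?_
          rw [← Finset.sum_add_distrib]
          exact Finset.sum_congr rfl fun j _ => by ring
      _ = (2:ℂ) * (∑ i, ∑ j, c i j * R i j) := by rw [← key R]; ring
  exact mul_left_cancel₀ two_ne_zero h2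
end algebra


section pointwise
variable {r : ℕ}

lemma pointwise_main (A B H0 K0 Pi' Pj' Qi' Qj' ti tj : Matrix (Fin r) (Fin r) ℂ)
    (hAH : A * H0 = 1) (hHA : H0 * A = 1) (hBK : B * K0 = 1) (hKB : K0 * B = 1)
    (hAh : Aᴴ = A) (hBh : Bᴴ = B) (hH0h : H0ᴴ = H0) (hK0h : K0ᴴ = K0)
    (hPi : Pi'ᴴ = Pi') (hPj : Pj'ᴴ = Pj') (hQi : Qi'ᴴ = Qi') (hQj : Qj'ᴴ = Qj') :
    ((Matrix.trace (A * (Pi' * (A * (Pj' * (A * K0)))))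
      + Matrix.trace (A * (Pj' * (A * (Pi' * (A * K0)))))
      - Matrix.trace (A * ((Pj' * A * Pi'
          + (4:ℂ) • (H0 * ti * A * tjᴴ * H0 - tjᴴ * H0 * ti)) * (A * K0)))
      - Matrix.trace (A * (Pj' * (A * Qi')))
      - Matrix.trace (A * (Pi' * (A * Qj')))
      + Matrix.trace (A * (Qj' * B * Qi'
          + (4:ℂ) • (K0 * ti * B * tjᴴ * K0 - tjᴴ * K0 * ti))))
    + (Matrix.trace (A * (Pj' * (A * (Pi' * (A * K0)))))
      + Matrix.trace (A * (Pi' * (A * (Pj' * (A * K0)))))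
      - Matrix.trace (A * ((Pi' * A * Pj'
          + (4:ℂ) • (H0 * tj * A * tiᴴ * H0 - tiᴴ * H0 * tj)) * (A * K0)))
      - Matrix.trace (A * (Pi' * (A * Qj')))
      - Matrix.trace (A * (Pj' * (A * Qi')))
      + Matrix.trace (A * (Qi' * B * Qj'
          + (4:ℂ) • (K0 * tj * B * tiᴴ * K0 - tiᴴ * K0 * tj)))))
    =
    ((Matrix.trace (A * ((Qj' - Pj' * (A * K0)) * (B * (Qi' - Pi' * (A * K0))ᴴ)))
      + (4:ℂ) * Matrix.trace (A * ((K0 * (tj * (B * K0)) - H0 * (tj * (A * K0)))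
          * (B * (K0 * (ti * (B * K0)) - H0 * (ti * (A * K0)))ᴴ))))
    + (Matrix.trace (A * ((Qi' - Pi' * (A * K0)) * (B * (Qj' - Pj' * (A * K0))ᴴ)))
      + (4:ℂ) * Matrix.trace (A * ((K0 * (ti * (B * K0)) - H0 * (ti * (A * K0)))
          * (B * (K0 * (tj * (B * K0)) - H0 * (tj * (A * K0)))ᴴ))))) := by
  have cAH : ∀ Z : Matrix (Fin r) (Fin r) ℂ, A * (H0 * Z) = Z := fun Z => by
    rw [← Matrix.mul_assoc, hAH, Matrix.one_mul]
  have cHA : ∀ Z : Matrix (Fin r) (Fin r) ℂ, H0 * (A * Z) = Z := fun Z => by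
    rw [← Matrix.mul_assoc, hHA, Matrix.one_mul]
  have cBK : ∀ Z : Matrix (Fin r) (Fin r) ℂ, B * (K0 * Z) = Z := fun Z => by
    rw [← Matrix.mul_assoc, hBK, Matrix.one_mul]
  have cKB : ∀ Z : Matrix (Fin r) (Fin r) ℂ, K0 * (B * Z) = Z := fun Z => by
    rw [← Matrix.mul_assoc, hKB, Matrix.one_mul]
  have hXh : ∀ Qk Pk : Matrix (Fin r) (Fin r) ℂ, Qkᴴ = Qk → Pkᴴ = Pk →
      (Qk - Pk * (A * K0))ᴴ = Qk - K0 * (A * Pk) := fun Qk Pk hq hp => by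
    simp [Matrix.conjTranspose_sub, Matrix.conjTranspose_mul, hq, hp, hAh, hK0h,
      Matrix.mul_assoc]
  have hWh : ∀ tk : Matrix (Fin r) (Fin r) ℂ,
      (K0 * (tk * (B * K0)) - H0 * (tk * (A * K0)))ᴴ
        = K0 * (B * (tkᴴ * K0)) - K0 * (A * (tkᴴ * H0)) := fun tk => by
    simp [Matrix.conjTranspose_sub, Matrix.conjTranspose_mul, hAh, hBh, hK0h, hH0h,
      Matrix.mul_assoc]
  rw [hXh Qi' Pi' hQi hPi, hXh Qj' Pj' hQj hPj, hWh ti, hWh tj]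
  -- normalize
  simp only [Matrix.smul_mul, Matrix.mul_smul, Matrix.trace_smul, smul_eq_mul,
    Matrix.mul_sub, Matrix.sub_mul, Matrix.mul_add, Matrix.add_mul,
    Matrix.trace_sub, Matrix.trace_add, Matrix.mul_assoc, cAH, cHA, cBK, cKB,
    hAH, hHA, hBK, hKB, Matrix.mul_one, Matrix.one_mul]
  have rot1 : ∀ X Y : Matrix (Fin r) (Fin r) ℂ,
      Matrix.trace (A * (X * (A * (K0 * (A * Y)))))
        = Matrix.trace (A * (Y * (A * (X * (A * K0))))) := by
    intro X Y
    rw [Matrix.trace_mul_comm]; simp only [Matrix.mul_assoc]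
    rw [Matrix.trace_mul_comm]; simp only [Matrix.mul_assoc]
    rw [Matrix.trace_mul_comm]; simp only [Matrix.mul_assoc]
    rw [Matrix.trace_mul_comm]; simp only [Matrix.mul_assoc]
  have rot2 : ∀ X Y : Matrix (Fin r) (Fin r) ℂ,
      Matrix.trace (A * (X * (A * Y))) = Matrix.trace (A * (Y * (A * X))) := by
    intro X Y
    rw [Matrix.trace_mul_comm]; simp only [Matrix.mul_assoc]
    rw [Matrix.trace_mul_comm]; simp only [Matrix.mul_assoc]
  have rot3 : ∀ X Y : Matrix (Fin r) (Fin r) ℂ,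
      Matrix.trace (A * (K0 * (X * (A * (Y * H0)))))
        = Matrix.trace (A * (Y * (K0 * X))) := by
    intro X Y
    rw [Matrix.trace_mul_comm]; simp only [Matrix.mul_assoc, hHA, Matrix.mul_one]
    rw [Matrix.trace_mul_comm]; simp only [Matrix.mul_assoc]
    rw [Matrix.trace_mul_comm]; simp only [Matrix.mul_assoc]
  have rot4 : ∀ X Y : Matrix (Fin r) (Fin r) ℂ,
      Matrix.trace (X * (A * (K0 * (A * (Y * H0)))))
        = Matrix.trace (A * (Y * (H0 * (X * (A * K0))))) := by
    intro X Y
    rw [Matrix.trace_mul_comm]; simp only [Matrix.mul_assoc]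
    rw [Matrix.trace_mul_comm]; simp only [Matrix.mul_assoc]
    rw [Matrix.trace_mul_comm]; simp only [Matrix.mul_assoc]
  rw [rot2 Qj' Pi', rot2 Qi' Pj', rot1 Pj' Pi', rot1 Pi' Pj',
    rot3 tj tiᴴ, rot3 ti tjᴴ, rot4 tj tiᴴ, rot4 ti tjᴴ]
  ring
end pointwise

section mainalg2
lemma sum_pull4 {n : ℕ} (c t : Fin n → Fin n → ℂ) :
    (∑ i, ∑ j, c i j * ((4:ℂ) * t i j)) = (4:ℂ) * ∑ i, ∑ j, c i j * t i j := by
  rw [Finset.mul_sum]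
  refine Finset.sum_congr rfl fun i _ => ?_
  rw [Finset.mul_sum]
  exact Finset.sum_congr rfl fun j _ => by ring

lemma main_algebra (G : Matrix (Fin n) (Fin n) ℝ) (hGs : ∀ i j, G i j = G j i)
    (hG : G.PosSemidef)
    (A B H0 K0 : Matrix (Fin r) (Fin r) ℂ)
    (hA : A.PosSemidef) (hB : B.PosSemidef)
    (hAH : A * H0 = 1) (hHA : H0 * A = 1) (hBK : B * K0 = 1) (hKB : K0 * B = 1)
    (hAh : Aᴴ = A) (hBh : Bᴴ = B) (hH0h : H0ᴴ = H0) (hK0h : K0ᴴ = K0)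
    (P Q θ0 : Fin n → Matrix (Fin r) (Fin r) ℂ)
    (hPh : ∀ k, (P k)ᴴ = P k) (hQh : ∀ k, (Q k)ᴴ = Q k)
    (S T : Fin n → Fin n → Matrix (Fin r) (Fin r) ℂ) (lam : ℝ)
    (hS : (∑ i, ∑ j, ((G i j : ℝ) : ℂ) • (S i j - P j * A * P i
        - (4:ℂ) • (H0 * θ0 i * A * (θ0 j)ᴴ * H0 - (θ0 j)ᴴ * H0 * θ0 i)))
        + ((4 * lam : ℝ) : ℂ) • H0 = 0)
    (hT : (∑ i, ∑ j, ((G i j : ℝ) : ℂ) • (T i j - Q j * B * Q i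
        - (4:ℂ) • (K0 * θ0 i * B * (θ0 j)ᴴ * K0 - (θ0 j)ᴴ * K0 * θ0 i)))
        + ((4 * lam : ℝ) : ℂ) • K0 = 0) :
    0 ≤ (∑ i, ∑ j, ((G i j : ℝ) : ℂ) *
      ((Matrix.trace (A * (P i * (A * (P j * (A * K0))))) + Matrix.trace (A * (P j * (A * (P i * (A * K0)))))
      - Matrix.trace (A * (S i j * (A * K0))) - Matrix.trace (A * (P j * (A * Q i))) - Matrix.trace (A * (P i * (A * Q j))) + Matrix.trace (A * T i j))
      + (Matrix.trace (B * (Q i * (B * (Q j * (B * H0))))) + Matrix.trace (B * (Q j * (B * (Q i * (B * H0)))))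
      - Matrix.trace (B * (T i j * (B * H0))) - Matrix.trace (B * (Q j * (B * P i))) - Matrix.trace (B * (Q i * (B * P j))) + Matrix.trace (B * S i j)))).re := by
  have hcs : ∀ i j, ((G i j : ℝ) : ℂ) = ((G j i : ℝ) : ℂ) := fun i j => by rw [hGs i j]
  have hScol : (∑ i, ∑ j, ((G i j : ℝ) : ℂ) • S i j)
      = (∑ i, ∑ j, ((G i j : ℝ) : ℂ) • (P j * A * P i + (4:ℂ) • (H0 * θ0 i * A * (θ0 j)ᴴ * H0 - (θ0 j)ᴴ * H0 * θ0 i))) - ((4 * lam : ℝ) : ℂ) • H0 := by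
    have h := hS
    simp only [smul_sub, smul_add, Finset.sum_sub_distrib, Finset.sum_add_distrib] at h ⊢
    rw [← sub_eq_zero, ← h]
    abel
  have hTcol : (∑ i, ∑ j, ((G i j : ℝ) : ℂ) • T i j)
      = (∑ i, ∑ j, ((G i j : ℝ) : ℂ) • (Q j * B * Q i + (4:ℂ) • (K0 * θ0 i * B * (θ0 j)ᴴ * K0 - (θ0 j)ᴴ * K0 * θ0 i))) - ((4 * lam : ℝ) : ℂ) • K0 := by
    have h := hT
    simp only [smul_sub, smul_add, Finset.sum_sub_distrib, Finset.sum_add_distrib] at h ⊢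
    rw [← sub_eq_zero, ← h]
    abel
  have eS : (∑ i, ∑ j, ((G i j : ℝ) : ℂ) * Matrix.trace (A * (S i j * (A * K0)))) = (∑ i, ∑ j, ((G i j : ℝ) : ℂ) * Matrix.trace (A * ((P j * A * P i + (4:ℂ) • (H0 * θ0 i * A * (θ0 j)ᴴ * H0 - (θ0 j)ᴴ * H0 * θ0 i)) * (A * K0)))) - (((4 * lam : ℝ) : ℂ) * Matrix.trace (A * K0)) := by
    rw [sum_trace_collect, hScol, Matrix.sub_mul, Matrix.mul_sub, Matrix.trace_sub,
      ← sum_trace_collect, Matrix.smul_mul, Matrix.mul_smul, Matrix.trace_smul, smul_eq_mul,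
      ← Matrix.mul_assoc, hAH, Matrix.one_mul]
  have eT : (∑ i, ∑ j, ((G i j : ℝ) : ℂ) * Matrix.trace (A * T i j)) = (∑ i, ∑ j, ((G i j : ℝ) : ℂ) * Matrix.trace (A * (Q j * B * Q i + (4:ℂ) • (K0 * θ0 i * B * (θ0 j)ᴴ * K0 - (θ0 j)ᴴ * K0 * θ0 i)))) - (((4 * lam : ℝ) : ℂ) * Matrix.trace (A * K0)) := by
    rw [sum_trace_collect', hTcol, Matrix.mul_sub, Matrix.trace_sub,
      ← sum_trace_collect', Matrix.mul_smul, Matrix.trace_smul, smul_eq_mul]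
  have eTk : (∑ i, ∑ j, ((G i j : ℝ) : ℂ) * Matrix.trace (B * (T i j * (B * H0)))) = (∑ i, ∑ j, ((G i j : ℝ) : ℂ) * Matrix.trace (B * ((Q j * B * Q i + (4:ℂ) • (K0 * θ0 i * B * (θ0 j)ᴴ * K0 - (θ0 j)ᴴ * K0 * θ0 i)) * (B * H0)))) - (((4 * lam : ℝ) : ℂ) * Matrix.trace (B * H0)) := by
    rw [sum_trace_collect, hTcol, Matrix.sub_mul, Matrix.mul_sub, Matrix.trace_sub,
      ← sum_trace_collect, Matrix.smul_mul, Matrix.mul_smul, Matrix.trace_smul, smul_eq_mul,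
      ← Matrix.mul_assoc, hBK, Matrix.one_mul]
  have eSk : (∑ i, ∑ j, ((G i j : ℝ) : ℂ) * Matrix.trace (B * S i j)) = (∑ i, ∑ j, ((G i j : ℝ) : ℂ) * Matrix.trace (B * (P j * A * P i + (4:ℂ) • (H0 * θ0 i * A * (θ0 j)ᴴ * H0 - (θ0 j)ᴴ * H0 * θ0 i)))) - (((4 * lam : ℝ) : ℂ) * Matrix.trace (B * H0)) := by
    rw [sum_trace_collect', hScol, Matrix.mul_sub, Matrix.trace_sub,
      ← sum_trace_collect', Matrix.mul_smul, Matrix.trace_smul, smul_eq_mul]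
  have main_eq : (∑ i, ∑ j, ((G i j : ℝ) : ℂ) *
      ((Matrix.trace (A * (P i * (A * (P j * (A * K0))))) + Matrix.trace (A * (P j * (A * (P i * (A * K0)))))
      - Matrix.trace (A * (S i j * (A * K0))) - Matrix.trace (A * (P j * (A * Q i))) - Matrix.trace (A * (P i * (A * Q j))) + Matrix.trace (A * T i j))
      + (Matrix.trace (B * (Q i * (B * (Q j * (B * H0))))) + Matrix.trace (B * (Q j * (B * (Q i * (B * H0)))))
      - Matrix.trace (B * (T i j * (B * H0))) - Matrix.trace (B * (Q j * (B * P i))) - Matrix.trace (B * (Q i * (B * P j))) + Matrix.trace (B * S i j))))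
      = ∑ i, ∑ j, ((G i j : ℝ) : ℂ) *
      ((Matrix.trace (A * ((Q j - P j * (A * K0)) * (B * (Q i - P i * (A * K0))ᴴ)))
      + (4:ℂ) * Matrix.trace (A * ((K0 * (θ0 j * (B * K0)) - H0 * (θ0 j * (A * K0)))
          * (B * (K0 * (θ0 i * (B * K0)) - H0 * (θ0 i * (A * K0)))ᴴ))))
      + (Matrix.trace (B * ((P j - Q j * (B * H0)) * (A * (P i - Q i * (B * H0))ᴴ)))
      + (4:ℂ) * Matrix.trace (B * ((H0 * (θ0 j * (A * H0)) - K0 * (θ0 j * (B * H0)))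
          * (A * (H0 * (θ0 i * (A * H0)) - K0 * (θ0 i * (B * H0)))ᴴ))))) := by
    calc (∑ i, ∑ j, ((G i j : ℝ) : ℂ) *
      ((Matrix.trace (A * (P i * (A * (P j * (A * K0))))) + Matrix.trace (A * (P j * (A * (P i * (A * K0)))))
      - Matrix.trace (A * (S i j * (A * K0))) - Matrix.trace (A * (P j * (A * Q i))) - Matrix.trace (A * (P i * (A * Q j))) + Matrix.trace (A * T i j))
      + (Matrix.trace (B * (Q i * (B * (Q j * (B * H0))))) + Matrix.trace (B * (Q j * (B * (Q i * (B * H0)))))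
      - Matrix.trace (B * (T i j * (B * H0))) - Matrix.trace (B * (Q j * (B * P i))) - Matrix.trace (B * (Q i * (B * P j))) + Matrix.trace (B * S i j))))
        = (∑ i, ∑ j, ((G i j : ℝ) : ℂ) * Matrix.trace (A * (P i * (A * (P j * (A * K0)))))) + (∑ i, ∑ j, ((G i j : ℝ) : ℂ) * Matrix.trace (A * (P j * (A * (P i * (A * K0)))))) - (∑ i, ∑ j, ((G i j : ℝ) : ℂ) * Matrix.trace (A * (S i j * (A * K0)))) - (∑ i, ∑ j, ((G i j : ℝ) : ℂ) * Matrix.trace (A * (P j * (A * Q i)))) - (∑ i, ∑ j, ((G i j : ℝ) : ℂ) * Matrix.trace (A * (P i * (A * Q j)))) + (∑ i, ∑ j, ((G i j : ℝ) : ℂ) * Matrix.trace (A * T i j))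
          + ((∑ i, ∑ j, ((G i j : ℝ) : ℂ) * Matrix.trace (B * (Q i * (B * (Q j * (B * H0)))))) + (∑ i, ∑ j, ((G i j : ℝ) : ℂ) * Matrix.trace (B * (Q j * (B * (Q i * (B * H0)))))) - (∑ i, ∑ j, ((G i j : ℝ) : ℂ) * Matrix.trace (B * (T i j * (B * H0)))) - (∑ i, ∑ j, ((G i j : ℝ) : ℂ) * Matrix.trace (B * (Q j * (B * P i)))) - (∑ i, ∑ j, ((G i j : ℝ) : ℂ) * Matrix.trace (B * (Q i * (B * P j)))) + (∑ i, ∑ j, ((G i j : ℝ) : ℂ) * Matrix.trace (B * S i j))) := by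
          simp only [mul_add, mul_sub, Finset.sum_add_distrib, Finset.sum_sub_distrib]
          all_goals ring
      _ = (∑ i, ∑ j, ((G i j : ℝ) : ℂ) * Matrix.trace (A * (P i * (A * (P j * (A * K0)))))) + (∑ i, ∑ j, ((G i j : ℝ) : ℂ) * Matrix.trace (A * (P j * (A * (P i * (A * K0)))))) - ((∑ i, ∑ j, ((G i j : ℝ) : ℂ) * Matrix.trace (A * ((P j * A * P i + (4:ℂ) • (H0 * θ0 i * A * (θ0 j)ᴴ * H0 - (θ0 j)ᴴ * H0 * θ0 i)) * (A * K0)))) - (((4 * lam : ℝ) : ℂ) * Matrix.trace (A * K0))) - (∑ i, ∑ j, ((G i j : ℝ) : ℂ) * Matrix.trace (A * (P j * (A * Q i)))) - (∑ i, ∑ j, ((G i j : ℝ) : ℂ) * Matrix.trace (A * (P i * (A * Q j)))) + ((∑ i, ∑ j, ((G i j : ℝ) : ℂ) * Matrix.trace (A * (Q j * B * Q i + (4:ℂ) • (K0 * θ0 i * B * (θ0 j)ᴴ * K0 - (θ0 j)ᴴ * K0 * θ0 i)))) - (((4 * lam : ℝ) : ℂ) * Matrix.trace (A * K0)))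
          + ((∑ i, ∑ j, ((G i j : ℝ) : ℂ) * Matrix.trace (B * (Q i * (B * (Q j * (B * H0)))))) + (∑ i, ∑ j, ((G i j : ℝ) : ℂ) * Matrix.trace (B * (Q j * (B * (Q i * (B * H0)))))) - ((∑ i, ∑ j, ((G i j : ℝ) : ℂ) * Matrix.trace (B * ((Q j * B * Q i + (4:ℂ) • (K0 * θ0 i * B * (θ0 j)ᴴ * K0 - (θ0 j)ᴴ * K0 * θ0 i)) * (B * H0)))) - (((4 * lam : ℝ) : ℂ) * Matrix.trace (B * H0))) - (∑ i, ∑ j, ((G i j : ℝ) : ℂ) * Matrix.trace (B * (Q j * (B * P i)))) - (∑ i, ∑ j, ((G i j : ℝ) : ℂ) * Matrix.trace (B * (Q i * (B * P j)))) + ((∑ i, ∑ j, ((G i j : ℝ) : ℂ) * Matrix.trace (B * (P j * A * P i + (4:ℂ) • (H0 * θ0 i * A * (θ0 j)ᴴ * H0 - (θ0 j)ᴴ * H0 * θ0 i)))) - (((4 * lam : ℝ) : ℂ) * Matrix.trace (B * H0)))) := by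
          rw [eS, eT, eTk, eSk]
      _ = (∑ i, ∑ j, ((G i j : ℝ) : ℂ) *
          ((Matrix.trace (A * (P i * (A * (P j * (A * K0))))) + Matrix.trace (A * (P j * (A * (P i * (A * K0)))))
      - Matrix.trace (A * ((P j * A * P i + (4:ℂ) • (H0 * θ0 i * A * (θ0 j)ᴴ * H0 - (θ0 j)ᴴ * H0 * θ0 i)) * (A * K0))) - Matrix.trace (A * (P j * (A * Q i))) - Matrix.trace (A * (P i * (A * Q j))) + Matrix.trace (A * (Q j * B * Q i + (4:ℂ) • (K0 * θ0 i * B * (θ0 j)ᴴ * K0 - (θ0 j)ᴴ * K0 * θ0 i))))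
          + (Matrix.trace (B * (Q i * (B * (Q j * (B * H0))))) + Matrix.trace (B * (Q j * (B * (Q i * (B * H0)))))
      - Matrix.trace (B * ((Q j * B * Q i + (4:ℂ) • (K0 * θ0 i * B * (θ0 j)ᴴ * K0 - (θ0 j)ᴴ * K0 * θ0 i)) * (B * H0))) - Matrix.trace (B * (Q j * (B * P i))) - Matrix.trace (B * (Q i * (B * P j))) + Matrix.trace (B * (P j * A * P i + (4:ℂ) • (H0 * θ0 i * A * (θ0 j)ᴴ * H0 - (θ0 j)ᴴ * H0 * θ0 i)))))) := by
          simp only [mul_add, mul_sub, Finset.sum_add_distrib, Finset.sum_sub_distrib]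
          all_goals ring
      _ = ∑ i, ∑ j, ((G i j : ℝ) : ℂ) *
          ((Matrix.trace (A * ((Q j - P j * (A * K0)) * (B * (Q i - P i * (A * K0))ᴴ)))
      + (4:ℂ) * Matrix.trace (A * ((K0 * (θ0 j * (B * K0)) - H0 * (θ0 j * (A * K0)))
          * (B * (K0 * (θ0 i * (B * K0)) - H0 * (θ0 i * (A * K0)))ᴴ))))
          + (Matrix.trace (B * ((P j - Q j * (B * H0)) * (A * (P i - Q i * (B * H0))ᴴ)))
      + (4:ℂ) * Matrix.trace (B * ((H0 * (θ0 j * (A * H0)) - K0 * (θ0 j * (B * H0)))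
          * (A * (H0 * (θ0 i * (A * H0)) - K0 * (θ0 i * (B * H0)))ᴴ))))) := by
          refine sum_sym_eq _ _ _ hcs fun i j => ?_
          have h1 := pointwise_main A B H0 K0 (P i) (P j) (Q i) (Q j) (θ0 i) (θ0 j)
            hAH hHA hBK hKB hAh hBh hH0h hK0h (hPh i) (hPh j) (hQh i) (hQh j)
          have h2 := pointwise_main B A K0 H0 (Q i) (Q j) (P i) (P j) (θ0 i) (θ0 j)
            hBK hKB hAH hHA hBh hAh hK0h hH0h (hQh i) (hQh j) (hPh i) (hPh j)
          linear_combination h1 + h2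
  rw [main_eq]
  have split4 : (∑ i, ∑ j, ((G i j : ℝ) : ℂ) *
      ((Matrix.trace (A * ((Q j - P j * (A * K0)) * (B * (Q i - P i * (A * K0))ᴴ)))
      + (4:ℂ) * Matrix.trace (A * ((K0 * (θ0 j * (B * K0)) - H0 * (θ0 j * (A * K0)))
          * (B * (K0 * (θ0 i * (B * K0)) - H0 * (θ0 i * (A * K0)))ᴴ))))
      + (Matrix.trace (B * ((P j - Q j * (B * H0)) * (A * (P i - Q i * (B * H0))ᴴ)))
      + (4:ℂ) * Matrix.trace (B * ((H0 * (θ0 j * (A * H0)) - K0 * (θ0 j * (B * H0)))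
          * (A * (H0 * (θ0 i * (A * H0)) - K0 * (θ0 i * (B * H0)))ᴴ))))))
      = (∑ i, ∑ j, ((G i j : ℝ) : ℂ) *
          Matrix.trace (A * ((Q j - P j * (A * K0)) * (B * (Q i - P i * (A * K0))ᴴ))))
        + (4:ℂ) * (∑ i, ∑ j, ((G i j : ℝ) : ℂ) *
          Matrix.trace (A * ((K0 * (θ0 j * (B * K0)) - H0 * (θ0 j * (A * K0)))
            * (B * (K0 * (θ0 i * (B * K0)) - H0 * (θ0 i * (A * K0)))ᴴ))))
        + ((∑ i, ∑ j, ((G i j : ℝ) : ℂ) *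
          Matrix.trace (B * ((P j - Q j * (B * H0)) * (A * (P i - Q i * (B * H0))ᴴ))))
        + (4:ℂ) * (∑ i, ∑ j, ((G i j : ℝ) : ℂ) *
          Matrix.trace (B * ((H0 * (θ0 j * (A * H0)) - K0 * (θ0 j * (B * H0)))
            * (A * (H0 * (θ0 i * (A * H0)) - K0 * (θ0 i * (B * H0)))ᴴ))))) := by
    simp only [mul_add, Finset.sum_add_distrib, sum_pull4]
  rw [split4]
  have p1 := pos_trace_sum G hG hA hB (fun k => Q k - P k * (A * K0))
  have p2 := pos_trace_sum G hG hA hB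
    (fun k => K0 * (θ0 k * (B * K0)) - H0 * (θ0 k * (A * K0)))
  have p3 := pos_trace_sum G hG hB hA (fun k => P k - Q k * (B * H0))
  have p4 := pos_trace_sum G hG hB hA
    (fun k => H0 * (θ0 k * (A * H0)) - K0 * (θ0 k * (B * H0)))
  have h4 : ∀ z : ℂ, ((4:ℂ) * z).re = 4 * z.re := fun z => by simp [Complex.mul_re]
  rw [Complex.add_re, Complex.add_re, Complex.add_re, h4, h4]
  exact add_nonneg (add_nonneg p1 (mul_nonneg (by norm_num) p2))
    (add_nonneg p3 (mul_nonneg (by norm_num) p4))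
end mainalg2

/-- **Proposition 3.4 in local affine coordinates.**
If `H` and `K` are two affine Hermitian–Einstein metrics (with the same Einstein
factor `λ`), then the Donaldson distance `σ(H,K) = tr(H⁻¹K) + tr(K⁻¹H) − 2r` is
subharmonic with respect to the affine Laplace operator: `Σ g^{ij}∂_i∂_j σ ≥ 0`. -/
theorem donaldson_distance_of_HE_metrics_subharmonic
    {n r : ℕ} (hn : 1 ≤ n) (hr : 1 ≤ r)
    (U : Set (Fin n → ℝ)) (hU : IsOpen U)
    (g : (Fin n → ℝ) → Matrix (Fin n) (Fin n) ℝ)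
    (hg : ContDiffOn ℝ (⊤ : ℕ∞) g U)
    (hgpos : ∀ x ∈ U, (g x).PosDef)
    (lam : ℝ)
    (θ : Fin n → (Fin n → ℝ) → Matrix (Fin r) (Fin r) ℂ)
    (hθ : ∀ i, ContDiffOn ℝ (⊤ : ℕ∞) (θ i) U)
    (hθflat : ∀ i j, ∀ x ∈ U, pd i (θ j) x = pd j (θ i) x)
    (hθcomm : ∀ i j, ∀ x ∈ U, θ i x * θ j x = θ j x * θ i x)
    (H K : (Fin n → ℝ) → Matrix (Fin r) (Fin r) ℂ)
    (hHsmooth : ContDiffOn ℝ (⊤ : ℕ∞) H U) (hKsmooth : ContDiffOn ℝ (⊤ : ℕ∞) K U)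
    (hHpos : ∀ x ∈ U, (H x).PosDef) (hKpos : ∀ x ∈ U, (K x).PosDef)
    -- `H` satisfies the affine Hermitian–Einstein equation
    (hHE_H : ∀ x ∈ U,
      (∑ i, ∑ j, (((g x)⁻¹ i j : ℝ) : ℂ) •
        (pd i (fun y => pd j H y) x
          - pd j H x * (H x)⁻¹ * pd i H x
          - (4 : ℂ) • (H x * θ i x * (H x)⁻¹ * (θ j x)ᴴ * H x - (θ j x)ᴴ * H x * θ i x)))
        + ((4 * lam : ℝ) : ℂ) • H x = 0)
    -- `K` satisfies the same affine Hermitian–Einstein equation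
    (hHE_K : ∀ x ∈ U,
      (∑ i, ∑ j, (((g x)⁻¹ i j : ℝ) : ℂ) •
        (pd i (fun y => pd j K y) x
          - pd j K x * (K x)⁻¹ * pd i K x
          - (4 : ℂ) • (K x * θ i x * (K x)⁻¹ * (θ j x)ᴴ * K x - (θ j x)ᴴ * K x * θ i x)))
        + ((4 * lam : ℝ) : ℂ) • K x = 0) :
    -- conclusion : `Σ g^{ij} ∂_i∂_j σ(H,K) ≥ 0` on `U`
    ∀ x ∈ U,
      0 ≤ ∑ i, ∑ j, (g x)⁻¹ i j *
        pd i (fun y =>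
          pd j (fun z =>
            (Matrix.trace ((H z)⁻¹ * K z) + Matrix.trace ((K z)⁻¹ * H z)).re - 2 * r) y) x := by
  intro x hx
  have hHdet : ∀ y ∈ U, IsUnit (H y).det := fun y hy =>
    isUnit_iff_ne_zero.mpr (hHpos y hy).det_pos.ne'
  have hKdet : ∀ y ∈ U, IsUnit (K y).det := fun y hy =>
    isUnit_iff_ne_zero.mpr (hKpos y hy).det_pos.ne'
  have dH : ∀ y ∈ U, DifferentiableAt ℝ H y := fun y hy => diff_of_contDiffOn hU hy hHsmooth
  have dK : ∀ y ∈ U, DifferentiableAt ℝ K y := fun y hy => diff_of_contDiffOn hU hy hKsmooth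
  have dHinv : ∀ y ∈ U, DifferentiableAt ℝ (fun z => (H z)⁻¹) y := fun y hy =>
    diff_inv (dH y hy) (hHdet y hy)
  have dKinv : ∀ y ∈ U, DifferentiableAt ℝ (fun z => (K z)⁻¹) y := fun y hy =>
    diff_inv (dK y hy) (hKdet y hy)
  have formula1 : ∀ (j : Fin n), ∀ y ∈ U,
      pd j (fun z =>
        (Matrix.trace ((H z)⁻¹ * K z) + Matrix.trace ((K z)⁻¹ * H z)).re - 2 * r) y
      = (Matrix.trace (-((H y)⁻¹ * pd j H y * (H y)⁻¹) * K y + (H y)⁻¹ * pd j K y)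
        + Matrix.trace (-((K y)⁻¹ * pd j K y * (K y)⁻¹) * H y + (K y)⁻¹ * pd j H y)).re := by
    intro j y hy
    have c1 := dHinv y hy
    have c1' := dKinv y hy
    have c2 : DifferentiableAt ℝ (fun z => (H z)⁻¹ * K z) y := diff_mul c1 (dK y hy)
    have c2' : DifferentiableAt ℝ (fun z => (K z)⁻¹ * H z) y := diff_mul c1' (dH y hy)
    have c3 : DifferentiableAt ℝ (fun z => Matrix.trace ((H z)⁻¹ * K z)) y := diff_trace c2
    have c3' : DifferentiableAt ℝ (fun z => Matrix.trace ((K z)⁻¹ * H z)) y := diff_trace c2'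
    have c4 : DifferentiableAt ℝ
        (fun z => Matrix.trace ((H z)⁻¹ * K z) + Matrix.trace ((K z)⁻¹ * H z)) y := c3.add c3'
    rw [pd_sub_const, pd_re c4, pd_add c3 c3', pd_trace c2, pd_trace c2',
      pd_mul c1 (dK y hy), pd_mul c1' (dH y hy),
      pd_inv hU hy (dH y hy) hHdet, pd_inv hU hy (dK y hy) hKdet]
  have key : ∀ i j : Fin n,
      pd i (fun y =>
        pd j (fun z =>
          (Matrix.trace ((H z)⁻¹ * K z) + Matrix.trace ((K z)⁻¹ * H z)).re - 2 * r) y) x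
      = ((Matrix.trace ((H x)⁻¹ * (pd i H x * ((H x)⁻¹ * (pd j H x * ((H x)⁻¹ * K x)))))
        + Matrix.trace ((H x)⁻¹ * (pd j H x * ((H x)⁻¹ * (pd i H x * ((H x)⁻¹ * K x)))))
        - Matrix.trace ((H x)⁻¹ * (pd i (fun y => pd j H y) x * ((H x)⁻¹ * K x)))
        - Matrix.trace ((H x)⁻¹ * (pd j H x * ((H x)⁻¹ * pd i K x)))
        - Matrix.trace ((H x)⁻¹ * (pd i H x * ((H x)⁻¹ * pd j K x)))
        + Matrix.trace ((H x)⁻¹ * pd i (fun y => pd j K y) x))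
        + (Matrix.trace ((K x)⁻¹ * (pd i K x * ((K x)⁻¹ * (pd j K x * ((K x)⁻¹ * H x)))))
        + Matrix.trace ((K x)⁻¹ * (pd j K x * ((K x)⁻¹ * (pd i K x * ((K x)⁻¹ * H x)))))
        - Matrix.trace ((K x)⁻¹ * (pd i (fun y => pd j K y) x * ((K x)⁻¹ * H x)))
        - Matrix.trace ((K x)⁻¹ * (pd j K x * ((K x)⁻¹ * pd i H x)))
        - Matrix.trace ((K x)⁻¹ * (pd i K x * ((K x)⁻¹ * pd j H x)))
        + Matrix.trace ((K x)⁻¹ * pd i (fun y => pd j H y) x))).re := by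
    intro i j
    have hcong : (fun y =>
        pd j (fun z =>
          (Matrix.trace ((H z)⁻¹ * K z) + Matrix.trace ((K z)⁻¹ * H z)).re - 2 * r) y)
        =ᶠ[nhds x] (fun y =>
          (Matrix.trace (-((H y)⁻¹ * pd j H y * (H y)⁻¹) * K y + (H y)⁻¹ * pd j K y)
          + Matrix.trace (-((K y)⁻¹ * pd j K y * (K y)⁻¹) * H y + (K y)⁻¹ * pd j H y)).re) :=
      Filter.eventuallyEq_of_mem (hU.mem_nhds hx) (fun y hy => formula1 j y hy)
    rw [pd_congr hcong]
    have hdHj := diff_pd hU hx hHsmooth j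
    have hdKj := diff_pd hU hx hKsmooth j
    have hHx := dH x hx
    have hKx := dK x hx
    have hHi := dHinv x hx
    have hKi := dKinv x hx
    have m1a : DifferentiableAt ℝ (fun y => (H y)⁻¹ * pd j H y) x := diff_mul hHi hdHj
    have m1b : DifferentiableAt ℝ (fun y => (H y)⁻¹ * pd j H y * (H y)⁻¹) x := diff_mul m1a hHi
    have m1c : DifferentiableAt ℝ (fun y => -((H y)⁻¹ * pd j H y * (H y)⁻¹)) x := m1b.neg
    have m1d : DifferentiableAt ℝ (fun y => -((H y)⁻¹ * pd j H y * (H y)⁻¹) * K y) x :=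
      diff_mul m1c hKx
    have m1e : DifferentiableAt ℝ (fun y => (H y)⁻¹ * pd j K y) x := diff_mul hHi hdKj
    have m1f : DifferentiableAt ℝ
        (fun y => -((H y)⁻¹ * pd j H y * (H y)⁻¹) * K y + (H y)⁻¹ * pd j K y) x := m1d.add m1e
    have m1g : DifferentiableAt ℝ (fun y =>
        Matrix.trace (-((H y)⁻¹ * pd j H y * (H y)⁻¹) * K y + (H y)⁻¹ * pd j K y)) x :=
      diff_trace m1f
    have m2a : DifferentiableAt ℝ (fun y => (K y)⁻¹ * pd j K y) x := diff_mul hKi hdKj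
    have m2b : DifferentiableAt ℝ (fun y => (K y)⁻¹ * pd j K y * (K y)⁻¹) x := diff_mul m2a hKi
    have m2c : DifferentiableAt ℝ (fun y => -((K y)⁻¹ * pd j K y * (K y)⁻¹)) x := m2b.neg
    have m2d : DifferentiableAt ℝ (fun y => -((K y)⁻¹ * pd j K y * (K y)⁻¹) * H y) x :=
      diff_mul m2c hHx
    have m2e : DifferentiableAt ℝ (fun y => (K y)⁻¹ * pd j H y) x := diff_mul hKi hdHj
    have m2f : DifferentiableAt ℝ
        (fun y => -((K y)⁻¹ * pd j K y * (K y)⁻¹) * H y + (K y)⁻¹ * pd j H y) x := m2d.add m2e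
    have m2g : DifferentiableAt ℝ (fun y =>
        Matrix.trace (-((K y)⁻¹ * pd j K y * (K y)⁻¹) * H y + (K y)⁻¹ * pd j H y)) x :=
      diff_trace m2f
    have mm : DifferentiableAt ℝ (fun y =>
        Matrix.trace (-((H y)⁻¹ * pd j H y * (H y)⁻¹) * K y + (H y)⁻¹ * pd j K y)
        + Matrix.trace (-((K y)⁻¹ * pd j K y * (K y)⁻¹) * H y + (K y)⁻¹ * pd j H y)) x :=
      m1g.add m2g
    rw [pd_re mm, pd_add m1g m2g, pd_trace m1f, pd_trace m2f, pd_add m1d m1e, pd_add m2d m2e,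
      pd_mul m1c hKx, pd_mul m2c hHx, pd_neg, pd_neg, pd_mul m1a hHi, pd_mul m2a hKi,
      pd_mul hHi hdHj, pd_mul hKi hdKj, pd_mul hHi hdKj, pd_mul hKi hdHj,
      pd_inv hU hx hHx hHdet, pd_inv hU hx hKx hKdet]
    congr 1
    simp only [Matrix.trace_add, Matrix.trace_sub, Matrix.trace_neg, Matrix.add_mul,
      Matrix.mul_add, Matrix.neg_mul, Matrix.mul_neg, Matrix.sub_mul, Matrix.mul_sub,
      Matrix.mul_assoc, neg_neg]
    ring
  have goal_eq : (∑ i, ∑ j, (g x)⁻¹ i j *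
        pd i (fun y =>
          pd j (fun z =>
            (Matrix.trace ((H z)⁻¹ * K z) + Matrix.trace ((K z)⁻¹ * H z)).re - 2 * r) y) x)
      = (∑ i, ∑ j, (((g x)⁻¹ i j : ℝ) : ℂ) *
          ((Matrix.trace ((H x)⁻¹ * (pd i H x * ((H x)⁻¹ * (pd j H x * ((H x)⁻¹ * K x)))))
        + Matrix.trace ((H x)⁻¹ * (pd j H x * ((H x)⁻¹ * (pd i H x * ((H x)⁻¹ * K x)))))
        - Matrix.trace ((H x)⁻¹ * (pd i (fun y => pd j H y) x * ((H x)⁻¹ * K x)))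
        - Matrix.trace ((H x)⁻¹ * (pd j H x * ((H x)⁻¹ * pd i K x)))
        - Matrix.trace ((H x)⁻¹ * (pd i H x * ((H x)⁻¹ * pd j K x)))
        + Matrix.trace ((H x)⁻¹ * pd i (fun y => pd j K y) x))
          + (Matrix.trace ((K x)⁻¹ * (pd i K x * ((K x)⁻¹ * (pd j K x * ((K x)⁻¹ * H x)))))
        + Matrix.trace ((K x)⁻¹ * (pd j K x * ((K x)⁻¹ * (pd i K x * ((K x)⁻¹ * H x)))))
        - Matrix.trace ((K x)⁻¹ * (pd i (fun y => pd j K y) x * ((K x)⁻¹ * H x)))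
        - Matrix.trace ((K x)⁻¹ * (pd j K x * ((K x)⁻¹ * pd i H x)))
        - Matrix.trace ((K x)⁻¹ * (pd i K x * ((K x)⁻¹ * pd j H x)))
        + Matrix.trace ((K x)⁻¹ * pd i (fun y => pd j H y) x)))).re := by
    simp only [Complex.re_sum]
    refine Finset.sum_congr rfl fun i _ => Finset.sum_congr rfl fun j _ => ?_
    rw [key i j]
    simp [Complex.mul_re]
  rw [goal_eq]
  have hGs : ∀ i j, (g x)⁻¹ i j = (g x)⁻¹ j i := by
    intro i j
    have hher : ((g x)⁻¹)ᴴ = (g x)⁻¹ := ((hgpos x hx).inv).1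
    conv_lhs => rw [← hher]
    simp [Matrix.conjTranspose_apply]
  exact main_algebra ((g x)⁻¹) hGs ((hgpos x hx).inv).posSemidef
    ((H x)⁻¹) ((K x)⁻¹) (H x) (K x)
    ((hHpos x hx).inv).posSemidef ((hKpos x hx).inv).posSemidef
    (Matrix.nonsing_inv_mul (H x) (hHdet x hx)) (Matrix.mul_nonsing_inv (H x) (hHdet x hx))
    (Matrix.nonsing_inv_mul (K x) (hKdet x hx)) (Matrix.mul_nonsing_inv (K x) (hKdet x hx))
    ((hHpos x hx).inv).1 ((hKpos x hx).inv).1 (hHpos x hx).1 (hKpos x hx).1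
    (fun k => pd k H x) (fun k => pd k K x) (fun k => θ k x)
    (fun k => by
      have hev : (fun z => (H z)ᴴ) =ᶠ[nhds x] H :=
        Filter.eventuallyEq_of_mem (hU.mem_nhds hx) (fun y hy => (hHpos y hy).1)
      calc (pd k H x)ᴴ = pd k (fun z => (H z)ᴴ) x := (pd_ct (dH x hx)).symm
        _ = pd k H x := pd_congr hev)
    (fun k => by
      have hev : (fun z => (K z)ᴴ) =ᶠ[nhds x] K :=
        Filter.eventuallyEq_of_mem (hU.mem_nhds hx) (fun y hy => (hKpos y hy).1)
      calc (pd k K x)ᴴ = pd k (fun z => (K z)ᴴ) x := (pd_ct (dK x hx)).symm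
        _ = pd k K x := pd_congr hev)
    (fun i j => pd i (fun y => pd j H y) x) (fun i j => pd i (fun y => pd j K y) x) lam
    (hHE_H x hx) (hHE_K x hx)
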